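/- arXiv:0802.1987 — 2 statements merged into one kernel-verified Lean document; each statement's English description precedes it below -/
import Mathlib

section
/- For λ ≥ 2 and σ₁, σ₂ > 0 let φ(λ) = λσ₁/(λ-1) + λσ₂ and λ₀ = 1 + (σ₁/σ₂)^{1/2}. If λ₀ ≥ 20/11, then for all 2 ≤ λ ≤ 9λ₀/10: |φ'(λ)| ≥ σ₂λ₀/(10(λ-1)) and |φ''(λ)/φ'(λ)| ≤ 22/(λ-1). -/
/-!
Write `t = λ - 1` and `s = λ₀ - 1`, so that `σ₁ = σ₂ s²`, `φ'(λ) = σ₂ (t² - s²) / t²` and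
`φ''(λ) = 2 σ₂ s² / t³`. The hypothesis `λ ≤ 9λ₀/10` reads `10 t ≤ 9 s - 1`, which keeps `t`
away from the stationary point `t = s`: it gives `10 (s - t) ≥ 1 + s`, hence the lower bound on
`|φ'|`, and `100 t² ≤ 81 s²`, hence `|φ''/φ'| = 2 s² / (t (s² - t²)) ≤ 22 / t`.
-/

open Real Filter Topology

lemma ne_zero_and_eq_mul_sq_sqrt_div {a b : ℝ} (h : 0 < √(a / b)) :
    b ≠ 0 ∧ a = b * √(a / b) ^ 2 := by
  have hab : 0 < a / b := Real.sqrt_pos.mp h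
  have hb : b ≠ 0 := by
    rintro rfl
    simp at hab
  refine ⟨hb, ?_⟩
  rw [Real.sq_sqrt hab.le]
  field_simp

section Phase

variable (σ₁ σ₂ : ℝ) {x : ℝ}

lemma hasDerivAt_phase (hx : x ≠ 1) :
    HasDerivAt (fun l => l * σ₁ / (l - 1) + l * σ₂) (σ₂ - σ₁ / (x - 1) ^ 2) x := by
  have hx' : x - 1 ≠ 0 := sub_ne_zero.mpr hx
  have h := ((hasDerivAt_mul_const σ₁).div ((hasDerivAt_id' x).sub_const 1) hx').add
    (hasDerivAt_mul_const σ₂)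
  exact h.congr_deriv (by field_simp; ring)

lemma hasDerivAt_phase_deriv (hx : x ≠ 1) :
    HasDerivAt (fun l => σ₂ - σ₁ / (l - 1) ^ 2) (2 * σ₁ / (x - 1) ^ 3) x := by
  have hx' : x - 1 ≠ 0 := sub_ne_zero.mpr hx
  have h := (hasDerivAt_const x σ₂).sub ((hasDerivAt_const x σ₁).div
    (((hasDerivAt_id' x).sub_const 1).pow 2) (pow_ne_zero 2 hx'))
  exact h.congr_deriv (by simp only [Pi.pow_apply]; field_simp; ring)

lemma deriv_phase (hx : x ≠ 1) :
    deriv (fun l => l * σ₁ / (l - 1) + l * σ₂) x = σ₂ - σ₁ / (x - 1) ^ 2 :=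
  (hasDerivAt_phase σ₁ σ₂ hx).deriv

lemma deriv_deriv_phase (hx : x ≠ 1) :
    deriv (deriv fun l => l * σ₁ / (l - 1) + l * σ₂) x = 2 * σ₁ / (x - 1) ^ 3 := by
  have hEq : deriv (fun l => l * σ₁ / (l - 1) + l * σ₂) =ᶠ[𝓝 x]
      fun l => σ₂ - σ₁ / (l - 1) ^ 2 := by
    filter_upwards [isOpen_ne.mem_nhds hx] with y hy using deriv_phase σ₁ σ₂ hy
  rw [hEq.deriv_eq]
  exact (hasDerivAt_phase_deriv σ₁ σ₂ hx).deriv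

end Phase

section Bounds

variable {s t : ℝ}

lemma one_add_div_le_sq_sub_sq_div_sq (ht : 0 < t) (hts : 10 * t ≤ 9 * s - 1) :
    (1 + s) / (10 * t) ≤ (s ^ 2 - t ^ 2) / t ^ 2 := by
  rw [div_le_div_iff₀ (by positivity) (by positivity)]
  have hgap : 1 + s ≤ 10 * (s - t) := by linarith
  nlinarith [mul_le_mul_of_nonneg_right hgap (by linarith : 0 ≤ s + t)]

lemma two_sq_div_cube_le (ht : 0 < t) (hts : 10 * t ≤ 9 * s - 1) :
    2 * s ^ 2 / t ^ 3 ≤ 22 / t * ((s ^ 2 - t ^ 2) / t ^ 2) := by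
  have hcube : 22 / t * ((s ^ 2 - t ^ 2) / t ^ 2) = 22 * (s ^ 2 - t ^ 2) / t ^ 3 := by
    field_simp
  rw [hcube]
  exact div_le_div_of_nonneg_right (by nlinarith) (by positivity)

lemma phase_bounds_of_eq_mul_sq {σ₁ σ₂ : ℝ} (hσ : σ₁ = σ₂ * s ^ 2) (hσ₂ : σ₂ ≠ 0)
    (ht : 0 < t) (hts : 10 * t ≤ 9 * s - 1) :
    σ₂ * (1 + s) / (10 * t) ≤ |σ₂ - σ₁ / t ^ 2| ∧
      |2 * σ₁ / t ^ 3 / (σ₂ - σ₁ / t ^ 2)| ≤ 22 / t := by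
  subst hσ
  have hs : 0 < s := by linarith
  set u := (s ^ 2 - t ^ 2) / t ^ 2 with hu_def
  have hu : 0 < u := div_pos (by nlinarith) (by positivity)
  have hφ' : σ₂ - σ₂ * s ^ 2 / t ^ 2 = -(σ₂ * u) := by
    rw [hu_def]
    field_simp
    ring
  have hratio : 2 * (σ₂ * s ^ 2) / t ^ 3 / -(σ₂ * u) = -(2 * s ^ 2 / t ^ 3 / u) := by
    field_simp
  rw [hφ', hratio, abs_neg, abs_neg, abs_mul, abs_of_pos hu,
    abs_of_pos (show 0 < 2 * s ^ 2 / t ^ 3 / u by positivity)]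
  constructor
  · calc σ₂ * (1 + s) / (10 * t) = σ₂ * ((1 + s) / (10 * t)) := mul_div_assoc _ _ _
      _ ≤ |σ₂| * ((1 + s) / (10 * t)) :=
        mul_le_mul_of_nonneg_right (le_abs_self σ₂) (div_nonneg (by linarith) (by positivity))
      _ ≤ |σ₂| * u := by gcongr; exact one_add_div_le_sq_sub_sq_div_sq ht hts
  · rw [div_le_iff₀ hu]
    exact two_sq_div_cube_le ht hts

end Bounds

theorem phase_derivative_bounds_general (σ₁ σ₂ : ℝ)
    (φ : ℝ → ℝ) (hφ : φ = fun l => l * σ₁ / (l - 1) + l * σ₂)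
    (lam0 : ℝ) (hlam0 : lam0 = 1 + Real.sqrt (σ₁ / σ₂))
    (l : ℝ) (hl2 : 2 ≤ l) (hl9 : l ≤ 9 * lam0 / 10) :
    σ₂ * lam0 / (10 * (l - 1)) ≤ |deriv φ l| ∧
    |deriv (deriv φ) l / deriv φ l| ≤ 22 / (l - 1) := by
  have hl : l ≠ 1 := by linarith
  have hts : 10 * (l - 1) ≤ 9 * √(σ₁ / σ₂) - 1 := by linarith
  obtain ⟨hσ₂, hσ₁⟩ := ne_zero_and_eq_mul_sq_sqrt_div (a := σ₁) (b := σ₂) (by linarith)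
  rw [hφ, deriv_deriv_phase σ₁ σ₂ hl, deriv_phase σ₁ σ₂ hl, hlam0]
  exact phase_bounds_of_eq_mul_sq hσ₁ hσ₂ (by linarith) hts

/-- Nonstationary phase derivative bounds for `φ(λ) = λσ₁/(λ-1) + λσ₂` in the regime
`2 ≤ λ ≤ 9lam0/10` when `lam0 = 1 + (σ₁/σ₂)^{1/2} ≥ 20/11`:
`|φ'(λ)| ≥ σ₂lam0/(10(λ-1))` and `|φ''(λ)/φ'(λ)| ≤ 22/(λ-1)`. -/
theorem phase_derivative_bounds (σ₁ σ₂ : ℝ) (h1 : 0 < σ₁) (h2 : 0 < σ₂)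
    (φ : ℝ → ℝ) (hφ : φ = fun l => l * σ₁ / (l - 1) + l * σ₂)
    (lam0 : ℝ) (hlam0 : lam0 = 1 + Real.sqrt (σ₁ / σ₂)) (hge : 20 / 11 ≤ lam0)
    (l : ℝ) (hl2 : 2 ≤ l) (hl9 : l ≤ 9 * lam0 / 10) :
    σ₂ * lam0 / (10 * (l - 1)) ≤ |deriv φ l| ∧
    |deriv (deriv φ) l / deriv φ l| ≤ 22 / (l - 1) :=
  phase_derivative_bounds_general σ₁ σ₂ φ hφ lam0 hlam0 l hl2 hl9
end

section
/- Let φ(λ) = λσ₁/(λ-1) + λσ₂ with σ₁, σ₂ > 0, λ₀ = 1 + (σ₁/σ₂)^{1/2} ≥ 20/11, and μ₀ = 11λ₀/10. There exist constants C > 0 and 0 < θ₀ ≪ 1 (independent of σ₁, σ₂) such that for all z ≥ 0 and 0 < θ ≤ θ₀: Im φ(μ₀ + z e^{iθ}) ≥ C z σ₂ θ. -/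
/-!
Write `w = μ₀ + z e^{iθ}`. Since `w σ₁/(w - 1) = σ₁ + σ₁/(w - 1)`, one gets
`Im φ(w) = Im w · (σ₂ - σ₁/|w - 1|²)`. With `s = (σ₁/σ₂)^{1/2}` we have `σ₁ = s² σ₂` and
`Re w - 1 ≥ μ₀ - 1 ≥ 11 s/10`, so the bracket is at least `(1 - (10/11)²) σ₂`, while
`Im w = z sin θ ≥ (2/π) z θ` by Jordan's inequality.
-/

open Complex

lemma im_div_sub_one (w : ℂ) : (w / (w - 1)).im = -w.im / normSq (w - 1) := by
  rw [div_im]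
  simp only [sub_re, sub_im, one_re, one_im]
  ring

lemma im_phase (σ₁ σ₂ : ℝ) (w : ℂ) :
    (w * σ₁ / (w - 1) + w * σ₂).im = w.im * (σ₂ - σ₁ / normSq (w - 1)) := by
  rw [add_im, mul_div_right_comm, im_mul_ofReal, im_mul_ofReal, im_div_sub_one]
  ring

lemma le_im_phase {σ₁ σ₂ q : ℝ} {w : ℂ} (hσ₂ : 0 ≤ σ₂) (hq : 0 ≤ q) (hw : 0 ≤ w.im)
    (hσ₁ : σ₁ ≤ q * σ₂ * (w.re - 1) ^ 2) :
    (1 - q) * σ₂ * w.im ≤ (w * σ₁ / (w - 1) + w * σ₂).im := by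
  have hsq : (w.re - 1) ^ 2 ≤ normSq (w - 1) := by
    rw [normSq_apply, sub_re, sub_im, one_re, one_im, sub_zero]
    nlinarith [mul_self_nonneg w.im]
  have hratio : σ₁ / normSq (w - 1) ≤ q * σ₂ :=
    div_le_of_le_mul₀ (normSq_nonneg _) (by positivity)
      (hσ₁.trans (by gcongr))
  rw [im_phase]
  nlinarith

lemma re_add_mul_exp_I (μ z θ : ℝ) : ((μ : ℂ) + z * exp (I * θ)).re = μ + z * Real.cos θ := by
  simp [exp_re]

lemma im_add_mul_exp_I (μ z θ : ℝ) : ((μ : ℂ) + z * exp (I * θ)).im = z * Real.sin θ := by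
  simp [exp_im]

lemma eq_sqrt_div_sq_mul {σ₁ σ₂ : ℝ} (hσ₁ : 0 ≤ σ₁) (hσ₂ : 0 < σ₂) :
    σ₁ = Real.sqrt (σ₁ / σ₂) ^ 2 * σ₂ := by
  rw [Real.sq_sqrt (div_nonneg hσ₁ hσ₂.le), div_mul_cancel₀ _ hσ₂.ne']

/-- Lower bound on the imaginary part of the holomorphically extended phase
`φ(z) = zσ₁/(z-1) + zσ₂` along the tilted ray from `μ₀ = 11lam0/10`:
there are `C > 0` and `0 < θ₀ < 1`, independent of `σ₁, σ₂`, with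
`Im φ(μ₀ + z e^{iθ}) ≥ C z σ₂ θ` for all `z ≥ 0`, `0 < θ ≤ θ₀`,
whenever `lam0 = 1 + (σ₁/σ₂)^{1/2} ≥ 20/11`. -/
theorem phase_im_lower_bound :
    ∃ C > 0, ∃ θ₀ : ℝ, 0 < θ₀ ∧ θ₀ < 1 ∧
      ∀ σ₁ σ₂ : ℝ, 0 < σ₁ → 0 < σ₂ →
      ∀ Φ : ℂ → ℂ, Φ = (fun w : ℂ => w * σ₁ / (w - 1) + w * σ₂) →
      ∀ lam0 μ₀ : ℝ, lam0 = 1 + Real.sqrt (σ₁ / σ₂) → 20 / 11 ≤ lam0 →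
        μ₀ = 11 * lam0 / 10 →
      ∀ z θ : ℝ, 0 ≤ z → 0 < θ → θ ≤ θ₀ →
        C * z * σ₂ * θ ≤ (Φ ((μ₀ : ℂ) + (z : ℂ) * Complex.exp (Complex.I * (θ : ℂ)))).im := by
  refine ⟨21 / 121 * (2 / Real.pi), by positivity, 1 / 2, by norm_num, by norm_num, ?_⟩
  rintro σ₁ σ₂ hσ₁ hσ₂ Φ rfl lam0 μ₀ rfl - rfl z θ hz hθ hθ₀
  have hθπ : θ ≤ Real.pi / 2 := by linarith [Real.pi_gt_three]
  have hcos : 0 ≤ Real.cos θ := Real.cos_nonneg_of_mem_Icc ⟨by linarith, hθπ⟩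
  have hjordan : 2 / Real.pi * θ ≤ Real.sin θ := Real.mul_le_sin hθ.le hθπ
  have hsin : 0 ≤ Real.sin θ := (by positivity : 0 ≤ 2 / Real.pi * θ).trans hjordan
  set s := Real.sqrt (σ₁ / σ₂)
  have hre : 11 / 10 * s ≤ 11 * (1 + s) / 10 + z * Real.cos θ - 1 := by
    linarith [mul_nonneg hz hcos]
  have hσ₁_le : σ₁ ≤ (10 / 11) ^ 2 * σ₂ * (11 * (1 + s) / 10 + z * Real.cos θ - 1) ^ 2 := by
    rw [eq_sqrt_div_sq_mul hσ₁.le hσ₂]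
    nlinarith [mul_self_le_mul_self (by positivity : 0 ≤ 11 / 10 * s) hre]
  have hphase := le_im_phase (σ₁ := σ₁) (q := (10 / 11) ^ 2)
    (w := (11 * (1 + s) / 10 : ℝ) + z * exp (I * θ)) hσ₂.le (by norm_num)
    (by rw [im_add_mul_exp_I]; exact mul_nonneg hz hsin)
    (by rwa [re_add_mul_exp_I])
  rw [im_add_mul_exp_I] at hphase
  calc 21 / 121 * (2 / Real.pi) * z * σ₂ * θ = 21 / 121 * σ₂ * (z * (2 / Real.pi * θ)) := by ring
    _ ≤ 21 / 121 * σ₂ * (z * Real.sin θ) := by gcongr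
    _ ≤ _ := by convert hphase using 1; norm_num
end
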